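/- arXiv:2006.15858 — 2 statements merged into one kernel-verified Lean document; each statement's English description precedes it below -/
import Mathlib

section
/- For 1 < q, s < ∞, a weight w belongs to A_q(ℝ^d) ∩ RH_s(ℝ^d) if and only if w^s belongs to A_{s(q-1)+1}(ℝ^d). -/
open MeasureTheory Filter Topology ENNReal NNReal
noncomputable section

/-- Shorthand: `ENNReal.ofReal`. -/
def oR (t : ℝ) : ℝ≥0∞ := ENNReal.ofReal t

/-- An axis-parallel cube in `ℝ^d`. -/
def IsCube {d : ℕ} (Q : Set (Fin d → ℝ)) : Prop :=
  ∃ (a : Fin d → ℝ) (r : ℝ), 0 < r ∧ Q = Set.univ.pi fun i => Set.Icc (a i) (a i + r)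

/-- The `ℝ≥0∞`-valued average of `g` over a set `Q`. -/
def avgE {d : ℕ} (Q : Set (Fin d → ℝ)) (g : (Fin d → ℝ) → ℝ≥0∞) : ℝ≥0∞ :=
  (volume Q)⁻¹ * ∫⁻ x in Q, g x

/-- A weight: locally integrable and a.e. positive. -/
def IsWeight {d : ℕ} (w : (Fin d → ℝ) → ℝ) : Prop :=
  MeasureTheory.LocallyIntegrable w volume ∧ ∀ᵐ x ∂(volume : Measure (Fin d → ℝ)), 0 < w x

/-- The Muckenhoupt `A_p` constant, `1 < p < ∞`. -/
def ApConst {d : ℕ} (p : ℝ) (w : (Fin d → ℝ) → ℝ) : ℝ≥0∞ :=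
  ⨆ Q : {S : Set (Fin d → ℝ) // IsCube S},
    avgE Q.1 (fun x => oR (w x)) *
      (avgE Q.1 fun x => oR (w x ^ (-(1:ℝ) / (p - 1)))) ^ (p - 1)

/-- The Muckenhoupt `A_1` constant. -/
def A1Const {d : ℕ} (w : (Fin d → ℝ) → ℝ) : ℝ≥0∞ :=
  ⨆ Q : {S : Set (Fin d → ℝ) // IsCube S},
    avgE Q.1 (fun x => oR (w x)) *
      essSup (fun x => oR ((w x)⁻¹)) (volume.restrict Q.1)

/-- Membership in the Muckenhoupt class `A_p(ℝ^d)`, `1 < p < ∞`. -/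
def MemAp {d : ℕ} (p : ℝ) (w : (Fin d → ℝ) → ℝ) : Prop :=
  IsWeight w ∧ ApConst p w < ⊤

/-- The Muckenhoupt–Wheeden `A_{p,q}` constant:
`sup_Q ⟨w^q⟩_Q^{1/q} ⟨w^{-p'}⟩_Q^{1/p'}` with `p' = p/(p-1)`. -/
def ApqConst {d : ℕ} (p q : ℝ) (w : (Fin d → ℝ) → ℝ) : ℝ≥0∞ :=
  ⨆ Q : {S : Set (Fin d → ℝ) // IsCube S},
    (avgE Q.1 fun x => oR (w x ^ q)) ^ (1 / q) *
      (avgE Q.1 fun x => oR (w x ^ (-(p / (p - 1))))) ^ ((p - 1) / p)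

/-- Membership in `A_{p,q}(ℝ^d)`. -/
def MemApq {d : ℕ} (p q : ℝ) (w : (Fin d → ℝ) → ℝ) : Prop :=
  IsWeight w ∧ ApqConst p q w < ⊤

/-- The reverse Hölder constant `sup_Q ⟨w^s⟩_Q^{1/s} ⟨w⟩_Q^{-1}`. -/
def RHConst {d : ℕ} (s : ℝ) (w : (Fin d → ℝ) → ℝ) : ℝ≥0∞ :=
  ⨆ Q : {S : Set (Fin d → ℝ) // IsCube S},
    (avgE Q.1 fun x => oR (w x ^ s)) ^ (1 / s) * (avgE Q.1 fun x => oR (w x))⁻¹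

/-- Membership in the reverse Hölder class `RH_s(ℝ^d)`. -/
def MemRH {d : ℕ} (s : ℝ) (w : (Fin d → ℝ) → ℝ) : Prop :=
  IsWeight w ∧ RHConst s w < ⊤

/-- Conjugate exponent `t' = t/(t-1)`. -/
def conjExp (t : ℝ) : ℝ := t / (t - 1)

/-- Membership in the limited-range class `A_{q/p_-} ∩ RH_{(p_+/q)'}`, with the
convention that for `q = p_-` the condition is the `A_1` condition and for `q = p_+`
the reverse Hölder condition is vacuous. -/
def MemLR {d : ℕ} (pm pp q : ℝ) (w : (Fin d → ℝ) → ℝ) : Prop :=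
  IsWeight w ∧ (q = pm → A1Const w < ⊤) ∧ (pm < q → ApConst (q / pm) w < ⊤) ∧
    (q < pp → RHConst (conjExp (pp / q)) w < ⊤)

/-- The weighted `L^p` (quasi-)norm `(∫ |f|^p w)^{1/p}`, `ℝ≥0∞`-valued. -/
def wnorm {d : ℕ} (p : ℝ) (w : (Fin d → ℝ) → ℝ) (f : (Fin d → ℝ) → ℂ) : ℝ≥0∞ :=
  (∫⁻ x, (‖f x‖₊ : ℝ≥0∞) ^ p * oR (w x)) ^ (1 / p)

/-- Membership in the weighted Lebesgue space `L^p(w)`. -/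
def MemWLp {d : ℕ} (p : ℝ) (w : (Fin d → ℝ) → ℝ) (f : (Fin d → ℝ) → ℂ) : Prop :=
  AEStronglyMeasurable f (volume : Measure (Fin d → ℝ)) ∧ wnorm p w f < ⊤

/-- `T` is bounded from `L^p(w)` to `L^q(v)`. -/
def BoundedOp {d : ℕ} (p : ℝ) (w : (Fin d → ℝ) → ℝ) (q : ℝ) (v : (Fin d → ℝ) → ℝ)
    (T : ((Fin d → ℝ) → ℂ) →ₗ[ℂ] ((Fin d → ℝ) → ℂ)) : Prop :=
  ∃ C : ℝ≥0, ∀ f, MemWLp p w f → wnorm q v (T f) ≤ C * wnorm p w f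

/-- `T` is compact with respect to an input norm `Nin` and an output norm `Nout`:
every norm-bounded sequence of (a.e. strongly measurable) functions has a subsequence
whose image converges in the output norm. -/
def CompactWithNorms {d : ℕ} (Nin Nout : ((Fin d → ℝ) → ℂ) → ℝ≥0∞)
    (T : ((Fin d → ℝ) → ℂ) →ₗ[ℂ] ((Fin d → ℝ) → ℂ)) : Prop :=
  ∀ f : ℕ → ((Fin d → ℝ) → ℂ),
    (∀ n, AEStronglyMeasurable (f n) (volume : Measure (Fin d → ℝ))) →
    (∀ n, Nin (f n) ≤ 1) →
    ∃ (φ : ℕ → ℕ) (g : (Fin d → ℝ) → ℂ), StrictMono φ ∧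
      Tendsto (fun n => Nout (T (f (φ n)) - g)) atTop (nhds 0)

/-- `T` is a compact operator from `L^p(w)` to `L^q(v)`. -/
def CompactOp {d : ℕ} (p : ℝ) (w : (Fin d → ℝ) → ℝ) (q : ℝ) (v : (Fin d → ℝ) → ℝ)
    (T : ((Fin d → ℝ) → ℂ) →ₗ[ℂ] ((Fin d → ℝ) → ℂ)) : Prop :=
  CompactWithNorms (wnorm p w) (wnorm q v) T

/-- The closed unit strip in `ℂ`. -/
def strip : Set ℂ := {z | 0 ≤ z.re ∧ z.re ≤ 1}

/-- The open unit strip in `ℂ`. -/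
def stripInt : Set ℂ := {z | 0 < z.re ∧ z.re < 1}

/-- The norm of Calderón's complex interpolation space `[L^{p₀}(w₀), L^{p₁}(w₁)]_θ`
realized via analytic families of functions on the strip. -/
def interpNorm {d : ℕ} (p0 : ℝ) (w0 : (Fin d → ℝ) → ℝ) (p1 : ℝ) (w1 : (Fin d → ℝ) → ℝ)
    (θ : ℝ) (f : (Fin d → ℝ) → ℂ) : ℝ≥0∞ :=
  ⨅ (F : ℂ → (Fin d → ℝ) → ℂ) (_ : F (θ : ℂ) = f)
    (_ : ∀ᵐ x ∂(volume : Measure (Fin d → ℝ)),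
      ContinuousOn (fun z => F z x) strip ∧ DifferentiableOn ℂ (fun z => F z x) stripInt),
    max (⨆ t : ℝ, wnorm p0 w0 (F (t * Complex.I)))
        (⨆ t : ℝ, wnorm p1 w1 (F (1 + t * Complex.I)))

/-- An admissible growth function `φ : [0,∞) → [1,∞)`. -/
def Admissible (φ : ℝ → ℝ) : Prop :=
  (∀ t, 0 ≤ t → 1 ≤ φ t) ∧ MonotoneOn φ (Set.Ici 0) ∧
    ∃ ω > (0:ℝ), ∃ C > (0:ℝ), ∀ ζ t : ℝ, 1 ≤ ζ → 0 ≤ t → φ (ζ * t) ≤ C * ζ ^ ω * φ t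

/-- The `A_p^ζ(φ)` constant of Tang/Wu–Wang. -/
def ApZConst {d : ℕ} (φ : ℝ → ℝ) (ζ p : ℝ) (w : (Fin d → ℝ) → ℝ) : ℝ≥0∞ :=
  ⨆ Q : {S : Set (Fin d → ℝ) // IsCube S},
    avgE Q.1 (fun x => oR (w x)) *
      (avgE Q.1 fun x => oR (w x ^ (-(1:ℝ) / (p - 1)))) ^ (p - 1) *
      (oR (φ ((volume Q.1).toReal) ^ (ζ * p)))⁻¹

/-- Membership in `A_p^ζ(φ)`. -/
def MemApZ {d : ℕ} (φ : ℝ → ℝ) (ζ p : ℝ) (w : (Fin d → ℝ) → ℝ) : Prop :=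
  IsWeight w ∧ ApZConst φ ζ p w < ⊤

/-!
Write `σ = w^{-1/(q-1)}` and `K(Q) = ⟨w^s⟩_Q^{1/s} ⟨σ⟩_Q^{q-1}`. Since `(w^s)^{-1/(s(q-1))} = σ`,
the `A_{s(q-1)+1}` quantity of `w^s` on a cube `Q` is exactly `K(Q)^s`, so `w^s ∈ A_{s(q-1)+1}` iff
`sup_Q K(Q) < ∞`. On the one hand `K(Q) ≤ [w]_{RH_s} ⟨w⟩_Q ⟨σ⟩_Q^{q-1} ≤ [w]_{RH_s} [w]_{A_q}`.
On the other hand Hölder's inequality gives `⟨w⟩_Q ≤ ⟨w^s⟩_Q^{1/s}` and `1 ≤ ⟨w⟩_Q ⟨σ⟩_Q^{q-1}`,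
so `sup_Q K(Q)` dominates both `[w]_{A_q}` and `[w]_{RH_s}`.
-/

section

variable {d : ℕ} {Q : Set (Fin d → ℝ)} {w : (Fin d → ℝ) → ℝ}

lemma IsCube.volume_eq (hQ : IsCube Q) : ∃ r, 0 < r ∧ volume Q = ENNReal.ofReal r ^ d := by
  obtain ⟨a, r, hr, rfl⟩ := hQ
  refine ⟨r, hr, ?_⟩
  rw [volume_pi_pi]
  simp [Real.volume_Icc]

lemma IsCube.volume_ne_zero (hQ : IsCube Q) : volume Q ≠ 0 := by
  obtain ⟨r, hr, hV⟩ := hQ.volume_eq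
  simp [hV, hr]

lemma IsCube.volume_ne_top (hQ : IsCube Q) : volume Q ≠ ⊤ := by
  obtain ⟨r, -, hV⟩ := hQ.volume_eq
  simp [hV]

lemma IsCube.isCompact (hQ : IsCube Q) : IsCompact Q := by
  obtain ⟨a, r, -, rfl⟩ := hQ
  exact isCompact_univ_pi fun _ => isCompact_Icc

lemma isCube_closedBall (x : Fin d → ℝ) {r : ℝ} (hr : 0 < r) : IsCube (Metric.closedBall x r) :=
  ⟨fun i => x i - r, 2 * r, by positivity, by
    rw [closedBall_pi x hr.le]
    congr! 2 with i
    rw [Real.closedBall_eq_Icc, show x i - r + 2 * r = x i + r by ring]⟩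

lemma avgE_eq_lintegral_smul (Q : Set (Fin d → ℝ)) (g : (Fin d → ℝ) → ℝ≥0∞) :
    avgE Q g = ∫⁻ x, g x ∂((volume Q)⁻¹ • volume.restrict Q) := by
  rw [lintegral_smul_measure, smul_eq_mul, avgE]

lemma avgE_congr {f g : (Fin d → ℝ) → ℝ≥0∞} (h : f =ᵐ[volume.restrict Q] g) :
    avgE Q f = avgE Q g := by
  rw [avgE, avgE, lintegral_congr_ae h]

lemma avgE_one_le (Q : Set (Fin d → ℝ)) : avgE Q (fun _ => 1) ≤ 1 := by
  simp [avgE]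

lemma IsCube.avgE_one (hQ : IsCube Q) : avgE Q (fun _ => 1) = 1 := by
  simpa [avgE] using ENNReal.inv_mul_cancel hQ.volume_ne_zero hQ.volume_ne_top

lemma avgE_mul_le_Lp_mul_Lq {p r : ℝ} (hpr : p.HolderConjugate r) {f g : (Fin d → ℝ) → ℝ≥0∞}
    (hf : AEMeasurable f (volume.restrict Q)) (hg : AEMeasurable g (volume.restrict Q)) :
    avgE Q (fun x => f x * g x) ≤
      avgE Q (fun x => f x ^ p) ^ (1 / p) * avgE Q (fun x => g x ^ r) ^ (1 / r) := by
  simp only [avgE_eq_lintegral_smul]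
  exact ENNReal.lintegral_mul_le_Lp_mul_Lq _ hpr (hf.smul_measure _) (hg.smul_measure _)

lemma avgE_le_avgE_rpow {s : ℝ} (hs : 1 < s) {g : (Fin d → ℝ) → ℝ≥0∞}
    (hg : AEMeasurable g (volume.restrict Q)) :
    avgE Q g ≤ avgE Q (fun x => g x ^ s) ^ (1 / s) := by
  have hs' := Real.HolderConjugate.conjExponent hs
  calc avgE Q g = avgE Q (fun x => g x * 1) := by simp only [mul_one]
    _ ≤ avgE Q (fun x => g x ^ s) ^ (1 / s) *
          avgE Q (fun _ => (1 : ℝ≥0∞) ^ s.conjExponent) ^ (1 / s.conjExponent) :=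
      avgE_mul_le_Lp_mul_Lq hs' hg aemeasurable_const
    _ ≤ avgE Q (fun x => g x ^ s) ^ (1 / s) := by
      simp only [ENNReal.one_rpow]
      exact mul_le_of_le_one_right' (ENNReal.rpow_le_one (avgE_one_le Q)
        (one_div_nonneg.2 hs'.symm.nonneg))

lemma IsCube.one_le_avgE_mul_avgE_rpow (hQ : IsCube Q) {q : ℝ} (hq : 1 < q)
    {u : (Fin d → ℝ) → ℝ≥0∞} (hu : AEMeasurable u (volume.restrict Q))
    (hu0 : ∀ᵐ x ∂volume.restrict Q, u x ≠ 0) (hut : ∀ᵐ x ∂volume.restrict Q, u x ≠ ⊤) :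
    1 ≤ avgE Q u * avgE Q (fun x => u x ^ (-(1:ℝ) / (q - 1))) ^ (q - 1) := by
  have hq' := Real.HolderConjugate.conjExponent hq
  have hq0 : q ≠ 0 := by positivity
  have hholder := avgE_mul_le_Lp_mul_Lq (Q := Q) hq' (hu.pow_const q⁻¹) (hu.pow_const (-q⁻¹))
  -- `u^{1/q} · u^{-1/q} = 1`, and the `q`-th resp. `q'`-th powers of the factors are `u` resp. `σ`
  have hprod : avgE Q (fun x => u x ^ q⁻¹ * u x ^ (-q⁻¹)) = 1 := by
    rw [← hQ.avgE_one]
    refine avgE_congr ?_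
    filter_upwards [hu0, hut] with x h0 ht
    rw [← ENNReal.rpow_add _ _ h0 ht, add_neg_cancel, ENNReal.rpow_zero]
  have hf : (fun x => (u x ^ q⁻¹) ^ q) = u := by
    ext x; rw [← ENNReal.rpow_mul, inv_mul_cancel₀ hq0, ENNReal.rpow_one]
  have hg : (fun x => (u x ^ (-q⁻¹)) ^ q.conjExponent) = fun x => u x ^ (-(1:ℝ) / (q - 1)) := by
    ext x; rw [← ENNReal.rpow_mul, Real.conjExponent]; congr 1; field_simp
  rw [hprod, hf, hg] at hholder
  calc (1 : ℝ≥0∞) ≤ (avgE Q u ^ (1 / q) * avgE Q (fun x => u x ^ (-(1:ℝ) / (q - 1))) ^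
          (1 / q.conjExponent)) ^ q := ENNReal.one_le_rpow hholder (by positivity)
    _ = avgE Q u * avgE Q (fun x => u x ^ (-(1:ℝ) / (q - 1))) ^ (q - 1) := by
      rw [ENNReal.mul_rpow_of_nonneg _ _ (by positivity), ← ENNReal.rpow_mul, ← ENNReal.rpow_mul,
        one_div_mul_cancel hq0, ENNReal.rpow_one, Real.conjExponent]
      congr 2; field_simp

lemma avgE_ofReal_rpow (hw : ∀ᵐ x ∂volume, 0 < w x) (Q : Set (Fin d → ℝ)) (r : ℝ) :
    avgE Q (fun x => oR (w x ^ r)) = avgE Q (fun x => oR (w x) ^ r) :=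
  avgE_congr <| ae_restrict_of_ae <| hw.mono fun _ hx => (ENNReal.ofReal_rpow_of_pos hx).symm

lemma IsCube.lintegral_ne_top_of_avgE_ne_top (hQ : IsCube Q) {g : (Fin d → ℝ) → ℝ≥0∞}
    (h : avgE Q g ≠ ⊤) : ∫⁻ x in Q, g x ≠ ⊤ := fun htop =>
  h (by rw [avgE, htop, ENNReal.mul_top (ENNReal.inv_ne_zero.2 hQ.volume_ne_top)])

lemma locallyIntegrable_of_avgE_ne_top {f : (Fin d → ℝ) → ℝ} (hf : AEStronglyMeasurable f volume)
    (hf0 : 0 ≤ᵐ[volume] f) (h : ∀ Q, IsCube Q → avgE Q (fun x => oR (f x)) ≠ ⊤) :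
    LocallyIntegrable f volume := fun x =>
  ⟨Metric.closedBall x 1, Metric.closedBall_mem_nhds x one_pos,
    (lintegral_ofReal_ne_top_iff_integrable hf.restrict (ae_restrict_of_ae hf0)).1
      ((isCube_closedBall x one_pos).lintegral_ne_top_of_avgE_ne_top
        (h _ (isCube_closedBall x one_pos)))⟩

namespace IsWeight

lemma aemeasurable (hw : IsWeight w) : AEMeasurable w volume :=
  hw.1.aestronglyMeasurable.aemeasurable

lemma avgE_ne_zero (hw : IsWeight w) (hQ : IsCube Q) : avgE Q (fun x => oR (w x)) ≠ 0 := by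
  refine mul_ne_zero (ENNReal.inv_ne_zero.2 hQ.volume_ne_top) fun h => hQ.volume_ne_zero ?_
  have hm : AEMeasurable (fun x => oR (w x)) (volume.restrict Q) :=
    hw.aemeasurable.ennreal_ofReal.restrict
  replace h := (lintegral_eq_zero_iff' hm).1 h
  rw [← Measure.restrict_eq_zero, ← ae_eq_bot, ← Filter.eventually_false_iff_eq_bot]
  filter_upwards [h, ae_restrict_of_ae hw.2] with x h0 hpos
  simp only [Pi.zero_apply, ENNReal.ofReal_eq_zero, oR] at h0
  linarith

lemma avgE_ne_top (hw : IsWeight w) (hQ : IsCube Q) : avgE Q (fun x => oR (w x)) ≠ ⊤ :=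
  ENNReal.mul_ne_top (ENNReal.inv_ne_top.2 hQ.volume_ne_zero) <|
    ((lintegral_ofReal_le_lintegral_enorm w).trans_lt
      (hw.1.integrableOn_isCompact hQ.isCompact).2).ne

end IsWeight

def ApRHConst (q s : ℝ) (w : (Fin d → ℝ) → ℝ) : ℝ≥0∞ :=
  ⨆ Q : {S : Set (Fin d → ℝ) // IsCube S},
    (avgE Q.1 fun x => oR (w x ^ s)) ^ (1 / s) *
      (avgE Q.1 fun x => oR (w x ^ (-(1:ℝ) / (q - 1)))) ^ (q - 1)

lemma ApConst_rpow_eq {q s : ℝ} (hw : ∀ᵐ x ∂volume, 0 < w x) (hs : 0 < s) :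
    ApConst (s * (q - 1) + 1) (fun x => w x ^ s) = ApRHConst q s w ^ s := by
  change _ = ENNReal.orderIsoRpow s hs _
  rw [ApRHConst, OrderIso.map_iSup]
  refine iSup_congr fun Q => ?_
  have hdual : (avgE Q.1 fun x => oR ((w x ^ s) ^ (-(1:ℝ) / (s * (q - 1) + 1 - 1)))) =
      avgE Q.1 fun x => oR (w x ^ (-(1:ℝ) / (q - 1))) := by
    refine avgE_congr (ae_restrict_of_ae (hw.mono fun x hx => ?_))
    dsimp only
    rw [← Real.rpow_mul hx.le, add_sub_cancel_right, mul_div_assoc', mul_neg_one, neg_div,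
      neg_div, div_mul_cancel_left₀ hs.ne', one_div]
  rw [hdual, ENNReal.orderIsoRpow_apply, ENNReal.mul_rpow_of_nonneg _ _ hs.le, ← ENNReal.rpow_mul,
    ← ENNReal.rpow_mul, one_div_mul_cancel hs.ne', ENNReal.rpow_one, add_sub_cancel_right,
    mul_comm s]

lemma ApConst_le_ApRHConst {q s : ℝ} (hw : IsWeight w) (hs : 1 < s) :
    ApConst q w ≤ ApRHConst q s w := by
  refine iSup_mono fun Q => mul_le_mul_left ?_ _
  rw [avgE_ofReal_rpow hw.2]
  exact avgE_le_avgE_rpow hs hw.aemeasurable.ennreal_ofReal.restrict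

lemma RHConst_le_ApRHConst {q s : ℝ} (hw : IsWeight w) (hq : 1 < q) :
    RHConst s w ≤ ApRHConst q s w := by
  refine iSup_mono fun Q => mul_le_mul_right ?_ _
  rw [ENNReal.inv_le_iff_le_mul (fun _ => hw.avgE_ne_zero Q.2)
    (fun h => absurd h (hw.avgE_ne_top Q.2)), avgE_ofReal_rpow hw.2]
  refine Q.2.one_le_avgE_mul_avgE_rpow hq hw.aemeasurable.ennreal_ofReal.restrict ?_ ?_
  · exact ae_restrict_of_ae (hw.2.mono fun x hx => ENNReal.ofReal_pos.2 hx |>.ne')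
  · exact ae_restrict_of_ae (ae_of_all _ fun x => ENNReal.ofReal_ne_top)

lemma IsWeight.avgE_rpow_le_RHConst_mul {s : ℝ} (hw : IsWeight w) (hQ : IsCube Q) :
    avgE Q (fun x => oR (w x ^ s)) ^ (1 / s) ≤ RHConst s w * avgE Q (fun x => oR (w x)) := by
  rw [← ENNReal.div_le_iff (hw.avgE_ne_zero hQ) (hw.avgE_ne_top hQ), div_eq_mul_inv]
  exact le_iSup_of_le (ι := {S : Set (Fin d → ℝ) // IsCube S}) ⟨Q, hQ⟩ le_rfl

lemma ApRHConst_le_RHConst_mul_ApConst {q s : ℝ} (hw : IsWeight w) :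
    ApRHConst q s w ≤ RHConst s w * ApConst q w := by
  refine iSup_le fun Q => ?_
  calc _ ≤ RHConst s w * avgE Q.1 (fun x => oR (w x)) *
        (avgE Q.1 fun x => oR (w x ^ (-(1:ℝ) / (q - 1)))) ^ (q - 1) :=
      mul_le_mul_left (hw.avgE_rpow_le_RHConst_mul Q.2) _
    _ ≤ RHConst s w * ApConst q w := by
      rw [mul_assoc]
      exact mul_le_mul_right (le_iSup_of_le Q le_rfl : _ ≤ ApConst q w) _

lemma IsWeight.rpow_of_RHConst_lt_top {s : ℝ} (hw : IsWeight w) (hs : 0 < s)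
    (hR : RHConst s w < ⊤) : IsWeight (fun x => w x ^ s) := by
  refine ⟨locallyIntegrable_of_avgE_ne_top (hw.aemeasurable.pow_const s).aestronglyMeasurable
    (hw.2.mono fun x hx => Real.rpow_nonneg hx.le s) fun Q hQ => ?_,
    hw.2.mono fun x hx => Real.rpow_pos_of_pos hx s⟩
  rw [← lt_top_iff_ne_top, ← ENNReal.rpow_lt_top_iff_of_pos (one_div_pos.2 hs)]
  exact (hw.avgE_rpow_le_RHConst_mul hQ).trans_lt
    (ENNReal.mul_lt_top hR (hw.avgE_ne_top hQ).lt_top)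

end

/-- For `1 < q, s < ∞`, `w ∈ A_q(ℝ^d) ∩ RH_s(ℝ^d)` iff
`w^s ∈ A_{s(q-1)+1}(ℝ^d)`. -/
theorem Ap_inter_RH_iff (d : ℕ) (q s : ℝ) (hq : 1 < q) (hs : 1 < s)
    (w : (Fin d → ℝ) → ℝ) (hw : IsWeight w) :
    (MemAp q w ∧ MemRH s w) ↔ MemAp (s * (q - 1) + 1) (fun x => w x ^ s) := by
  have hs0 : 0 < s := zero_lt_one.trans hs
  rw [MemAp, MemAp, MemRH, ApConst_rpow_eq hw.2 hs0, ENNReal.rpow_lt_top_iff_of_pos hs0]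
  constructor
  · rintro ⟨⟨-, hA⟩, -, hR⟩
    exact ⟨hw.rpow_of_RHConst_lt_top hs0 hR,
      (ApRHConst_le_RHConst_mul_ApConst hw).trans_lt (ENNReal.mul_lt_top hR hA)⟩
  · rintro ⟨-, hK⟩
    exact ⟨⟨hw, (ApConst_le_ApRHConst hw hs).trans_lt hK⟩,
      ⟨hw, (RHConst_le_ApRHConst hw hq).trans_lt hK⟩⟩
end
end

section
/- If w ∈ A_p(ℝ^d) for some 1 < p < ∞, then there exists 1 < q < p such that w ∈ A_q(ℝ^d) (openness of the Muckenhoupt classes). -/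
open MeasureTheory Filter Topology ENNReal NNReal
noncomputable section

/-!
Let `σ = w ^ (-1 / (p - 1))`. Since `w σ ^ (p - 1) = 1`, Hölder gives `|E| ^ p ≤ w(E) σ(E) ^ (p - 1)`,
and together with the `A_p` bound on a cube `Q` this shows that a subset of at most half of `Q`
carries at most a fixed fraction `β < 1` of the `σ`-mass of `Q`. Running a Calderón–Zygmund
decomposition of `Q` at the levels `2 ^ ((d + 1) j) ⟨σ⟩_Q`, this makes the `σ`-mass of the
superlevel sets of the dyadic maximal function decay like `β ^ j`, while Lebesgue differentiation
along dyadic cubes bounds `σ` off them. Summing over the layers gives the reverse Hölder inequality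
`⟨σ ^ (1 + ε)⟩_Q ≤ C ⟨σ⟩_Q ^ (1 + ε)`, and as `w ^ (-1 / (q - 1)) = σ ^ (1 + ε)` for
`q - 1 = (p - 1) / (1 + ε)`, the `A_q` constant of `w` is at most `C ^ (q - 1)` times its `A_p`
constant.
-/

open Set MeasureTheory Filter Topology ENNReal

namespace IsCube

variable {d : ℕ} {Q : Set (Fin d → ℝ)}

lemma measurableSet (hQ : IsCube Q) : MeasurableSet Q := by
  obtain ⟨a, r, -, rfl⟩ := hQ
  exact MeasurableSet.univ_pi fun _ => measurableSet_Icc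

lemma exists_volume_eq (hQ : IsCube Q) : ∃ r, 0 < r ∧ volume Q = ENNReal.ofReal r ^ d := by
  obtain ⟨a, r, hr, rfl⟩ := hQ
  refine ⟨r, hr, ?_⟩
  rw [volume_pi_pi]
  simp [Real.volume_Icc]

lemma volume_pos (hQ : IsCube Q) : 0 < volume Q := by
  obtain ⟨r, hr, h⟩ := hQ.exists_volume_eq
  rw [h]
  exact ENNReal.pow_pos (ENNReal.ofReal_pos.2 hr) d

lemma volume_ne_top_s4 (hQ : IsCube Q) : volume Q ≠ ⊤ := by
  obtain ⟨r, -, h⟩ := hQ.exists_volume_eq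
  rw [h]
  exact pow_ne_top ofReal_ne_top

lemma lintegral_eq_volume_mul_avgE (hQ : IsCube Q) (f : (Fin d → ℝ) → ℝ≥0∞) :
    ∫⁻ x in Q, f x = volume Q * avgE Q f := by
  rw [avgE, ← mul_assoc, ENNReal.mul_inv_cancel hQ.volume_pos.ne' hQ.volume_ne_top_s4, one_mul]

end IsCube

namespace Muckenhoupt

variable {d : ℕ}

section Dyadic

variable (a : Fin d → ℝ) (r : ℝ)

/-- Half-open, so that the cubes of one generation are disjoint; `closedDyadicCube` is the version
that is an `IsCube`, and the two agree up to a null set. -/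
def dyadicCube (n : ℕ) (k : Fin d → ℤ) : Set (Fin d → ℝ) :=
  univ.pi fun i => Ico (a i + k i * (r / 2 ^ n)) (a i + k i * (r / 2 ^ n) + r / 2 ^ n)

def closedDyadicCube (n : ℕ) (k : Fin d → ℤ) : Set (Fin d → ℝ) :=
  univ.pi fun i => Icc (a i + k i * (r / 2 ^ n)) (a i + k i * (r / 2 ^ n) + r / 2 ^ n)

def dyadicIndex (n : ℕ) (x : Fin d → ℝ) : Fin d → ℤ :=
  fun i => ⌊(x i - a i) / (r / 2 ^ n)⌋

/-- Division on `ℤ` rounds down for positive divisors, so this indexes the cube `j` generations up,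
also for negative positions. -/
def ancestor (j : ℕ) (k : Fin d → ℤ) : Fin d → ℤ :=
  fun i => k i / 2 ^ j

variable {a r} {m n : ℕ} {k k' : Fin d → ℤ} {x : Fin d → ℝ}

lemma ancestor_zero (k : Fin d → ℤ) : ancestor 0 k = k := by
  funext i
  simp [ancestor]

lemma mem_dyadicCube_iff (hr : 0 < r) : x ∈ dyadicCube a r n k ↔ dyadicIndex a r n x = k := by
  have hs : 0 < r / 2 ^ n := by positivity
  simp only [dyadicCube, mem_univ_pi, mem_Ico, funext_iff, dyadicIndex, Int.floor_eq_iff,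
    le_div_iff₀ hs, div_lt_iff₀ hs]
  refine forall_congr' fun i => ?_
  constructor <;> rintro ⟨h₁, h₂⟩ <;> constructor <;> linarith

lemma mem_dyadicCube_dyadicIndex (hr : 0 < r) (n : ℕ) (x : Fin d → ℝ) :
    x ∈ dyadicCube a r n (dyadicIndex a r n x) :=
  (mem_dyadicCube_iff hr).2 rfl

lemma ancestor_dyadicIndex (hmn : m ≤ n) (x : Fin d → ℝ) :
    ancestor (n - m) (dyadicIndex a r n x) = dyadicIndex a r m x := by
  funext i
  have hpow : (2 : ℝ) ^ n = 2 ^ m * 2 ^ (n - m) := by rw [← pow_add, Nat.add_sub_cancel' hmn]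
  have hscale : (x i - a i) / (r / 2 ^ m) =
      (x i - a i) / (r / 2 ^ n) / ((2 ^ (n - m) : ℕ) : ℝ) := by
    push_cast
    rw [hpow]
    field_simp
  simp only [dyadicIndex, ancestor, hscale, Int.floor_div_natCast]
  norm_cast

lemma dyadicCube_subset_ancestor (hr : 0 < r) (hmn : m ≤ n) :
    dyadicCube a r n k ⊆ dyadicCube a r m (ancestor (n - m) k) := by
  intro x hx
  rw [mem_dyadicCube_iff hr] at hx ⊢
  rw [← hx, ancestor_dyadicIndex hmn]

lemma ancestor_eq_of_mem (hr : 0 < r) (hmn : m ≤ n) (hx : x ∈ dyadicCube a r m k)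
    (hx' : x ∈ dyadicCube a r n k') : ancestor (n - m) k' = k := by
  rw [mem_dyadicCube_iff hr] at hx hx'
  rw [← hx, ← hx', ancestor_dyadicIndex hmn]

lemma measurableSet_dyadicCube : MeasurableSet (dyadicCube a r n k) :=
  MeasurableSet.univ_pi fun _ => measurableSet_Ico

lemma dyadicCube_subset_closedDyadicCube : dyadicCube a r n k ⊆ closedDyadicCube a r n k :=
  pi_mono fun _ _ => Ico_subset_Icc_self

lemma volume_dyadicCube : volume (dyadicCube a r n k) = ENNReal.ofReal (r / 2 ^ n) ^ d := by
  rw [dyadicCube, volume_pi_pi]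
  simp [Real.volume_Ico]

lemma volume_closedDyadicCube :
    volume (closedDyadicCube a r n k) = ENNReal.ofReal (r / 2 ^ n) ^ d := by
  rw [closedDyadicCube, volume_pi_pi]
  simp [Real.volume_Icc]

lemma isCube_closedDyadicCube (hr : 0 < r) : IsCube (closedDyadicCube a r n k) :=
  ⟨fun i => a i + k i * (r / 2 ^ n), r / 2 ^ n, by positivity, rfl⟩

lemma volume_dyadicCube_pos (hr : 0 < r) : 0 < volume (dyadicCube a r n k) := by
  rw [volume_dyadicCube, ← volume_closedDyadicCube (a := a) (k := k)]
  exact (isCube_closedDyadicCube hr).volume_pos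

lemma volume_dyadicCube_ne_top : volume (dyadicCube a r n k) ≠ ⊤ := by
  rw [volume_dyadicCube]
  exact pow_ne_top ofReal_ne_top

lemma dyadicCube_ae_eq_closedDyadicCube :
    dyadicCube a r n k =ᵐ[volume] closedDyadicCube a r n k :=
  ae_eq_of_subset_of_measure_ge dyadicCube_subset_closedDyadicCube
    (volume_closedDyadicCube.trans volume_dyadicCube.symm).le
    measurableSet_dyadicCube.nullMeasurableSet
    (by rw [volume_closedDyadicCube]; exact pow_ne_top ofReal_ne_top)

lemma volume_dyadicCube_eq_two_pow_mul (hr : 0 < r) (n : ℕ) (k k' : Fin d → ℤ) :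
    volume (dyadicCube a r n k) = 2 ^ d * volume (dyadicCube a r (n + 1) k') := by
  rw [volume_dyadicCube, volume_dyadicCube, ← mul_pow, ← ENNReal.ofReal_ofNat 2,
    ← ENNReal.ofReal_mul zero_le_two, pow_succ]
  congr 2
  field_simp

lemma closedDyadicCube_zero_zero :
    closedDyadicCube a r 0 0 = univ.pi fun i => Icc (a i) (a i + r) := by
  simp [closedDyadicCube]

lemma closedDyadicCube_eq_closedBall (hr : 0 < r) (n : ℕ) (k : Fin d → ℤ) :
    closedDyadicCube a r n k =
      Metric.closedBall (fun i => a i + k i * (r / 2 ^ n) + r / 2 ^ n / 2) (r / 2 ^ n / 2) := by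
  rw [closedBall_pi _ (by positivity)]
  refine pi_congr rfl fun i _ => ?_
  rw [Real.closedBall_eq_Icc]
  congr 1 <;> ring

end Dyadic

section Differentiation

variable {a : Fin d → ℝ} {r : ℝ} {g : (Fin d → ℝ) → ℝ≥0∞}

lemma isCube_closedBall (x : Fin d → ℝ) {ρ : ℝ} (hρ : 0 < ρ) : IsCube (Metric.closedBall x ρ) := by
  refine ⟨fun i => x i - ρ, 2 * ρ, by positivity, ?_⟩
  rw [closedBall_pi _ hρ.le]
  refine pi_congr rfl fun i _ => ?_
  rw [Real.closedBall_eq_Icc]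
  ring_nf

lemma isLocallyFiniteMeasure_withDensity (hfin : ∀ Q, IsCube Q → ∫⁻ x in Q, g x ≠ ⊤) :
    IsLocallyFiniteMeasure (volume.withDensity g) := by
  refine ⟨fun x => ⟨Metric.closedBall x 1, Metric.closedBall_mem_nhds x one_pos, ?_⟩⟩
  rw [withDensity_apply _ Metric.isClosed_closedBall.measurableSet]
  exact (hfin _ (isCube_closedBall x one_pos)).lt_top

lemma tendsto_closedDyadicCube_filterAt (hr : 0 < r) (x : Fin d → ℝ) :
    Tendsto (fun n => closedDyadicCube a r n (dyadicIndex a r n x)) atTop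
      ((IsUnifLocDoublingMeasure.vitaliFamily volume 1).filterAt x) := by
  simp_rw [closedDyadicCube_eq_closedBall hr]
  refine IsUnifLocDoublingMeasure.tendsto_closedBall_filterAt _ _ _ ?_ (Eventually.of_forall
    fun n => ?_)
  · refine tendsto_nhdsWithin_iff.2 ⟨?_, Eventually.of_forall fun n => mem_Ioi.2 (by positivity)⟩
    have h2 := tendsto_pow_atTop_atTop_of_one_lt (by norm_num : (1 : ℝ) < 2)
    simpa using (h2.const_div_atTop r).div_const 2
  · rw [one_mul, ← closedDyadicCube_eq_closedBall hr]
    exact dyadicCube_subset_closedDyadicCube (mem_dyadicCube_dyadicIndex hr n x)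

lemma ae_tendsto_avgE_dyadicCube (hr : 0 < r) (hfin : ∀ Q, IsCube Q → ∫⁻ x in Q, g x ≠ ⊤)
    (hg : AEMeasurable g) :
    ∀ᵐ x, Tendsto (fun n => avgE (dyadicCube a r n (dyadicIndex a r n x)) g) atTop (𝓝 (g x)) := by
  have := isLocallyFiniteMeasure_withDensity hfin
  have hcube (n : ℕ) (k : Fin d → ℤ) : volume.withDensity g (closedDyadicCube a r n k) /
      volume (closedDyadicCube a r n k) = avgE (dyadicCube a r n k) g := by
    have h := dyadicCube_ae_eq_closedDyadicCube (a := a) (r := r) (n := n) (k := k)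
    rw [avgE, ← withDensity_apply _ measurableSet_dyadicCube, ENNReal.div_eq_inv_mul,
      measure_congr h,
      measure_congr (h.filter_mono (withDensity_absolutelyContinuous volume g).ae_le)]
  filter_upwards [(IsUnifLocDoublingMeasure.vitaliFamily volume 1).ae_tendsto_rnDeriv
    (volume.withDensity g), Measure.rnDeriv_withDensity₀ volume hg] with x hx hrn
  rw [← hrn]
  simpa only [Function.comp_def, hcube] using
    hx.comp (tendsto_closedDyadicCube_filterAt (a := a) hr x)

end Differentiation

/-- For `β < 1`, one of the equivalent forms of Muckenhoupt's `A_∞` condition. -/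
def AInftyCondition (β : ℝ≥0∞) (g : (Fin d → ℝ) → ℝ≥0∞) : Prop :=
  ∀ Q, IsCube Q → ∀ E ⊆ Q, MeasurableSet E → 2 * volume E ≤ volume Q →
    volume.withDensity g E ≤ β * volume.withDensity g Q

section CalderonZygmund

variable (a : Fin d → ℝ) (r : ℝ) (g : (Fin d → ℝ) → ℝ≥0∞)

/-- The maximal dyadic subcubes of the root cube `dyadicCube a r 0 0` on which the average of `g`
exceeds `t`. -/
def stoppingCubes (t : ℝ≥0∞) : Set (ℕ × (Fin d → ℤ)) :=
  {q | ancestor q.1 q.2 = 0 ∧ t < avgE (dyadicCube a r q.1 q.2) g ∧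
    ∀ m < q.1, avgE (dyadicCube a r m (ancestor (q.1 - m) q.2)) g ≤ t}

def czSet (t : ℝ≥0∞) : Set (Fin d → ℝ) :=
  ⋃ q ∈ stoppingCubes a r g t, dyadicCube a r q.1 q.2

variable {a r g} {t t' β : ℝ≥0∞} {q q' : ℕ × (Fin d → ℤ)} {x : Fin d → ℝ}

lemma withDensity_dyadicCube (hr : 0 < r) (n : ℕ) (k : Fin d → ℤ) :
    volume.withDensity g (dyadicCube a r n k) =
      avgE (dyadicCube a r n k) g * volume (dyadicCube a r n k) := by
  rw [withDensity_apply _ measurableSet_dyadicCube, avgE, mul_comm, ← mul_assoc,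
    ENNReal.mul_inv_cancel (volume_dyadicCube_pos hr).ne' volume_dyadicCube_ne_top, one_mul]

lemma mem_czSet_iff (hr : 0 < r) :
    x ∈ czSet a r g t ↔
      dyadicIndex a r 0 x = 0 ∧ ∃ n, t < avgE (dyadicCube a r n (dyadicIndex a r n x)) g := by
  have hroot (n : ℕ) : ancestor n (dyadicIndex a r n x) = dyadicIndex a r 0 x := by
    simpa using ancestor_dyadicIndex (a := a) (r := r) (Nat.zero_le n) x
  constructor
  · simp only [czSet, mem_iUnion₂]
    rintro ⟨q, hq, hx⟩
    rw [mem_dyadicCube_iff hr] at hx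
    exact ⟨by rw [← hroot, hx, hq.1], q.1, hx ▸ hq.2.1⟩
  · classical
    rintro ⟨h0, hex⟩
    refine mem_iUnion₂.2 ⟨(Nat.find hex, dyadicIndex a r (Nat.find hex) x),
      ⟨by rw [hroot, h0], Nat.find_spec hex, fun m hm => ?_⟩, mem_dyadicCube_dyadicIndex hr _ x⟩
    rw [ancestor_dyadicIndex hm.le]
    exact not_lt.1 (Nat.find_min hex hm)

lemma czSet_subset_dyadicCube_zero (hr : 0 < r) : czSet a r g t ⊆ dyadicCube a r 0 0 :=
  fun _ hx => (mem_dyadicCube_iff hr).2 ((mem_czSet_iff hr).1 hx).1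

lemma czSet_anti (hr : 0 < r) (ht : t ≤ t') : czSet a r g t' ⊆ czSet a r g t := by
  intro x hx
  rw [mem_czSet_iff hr] at hx ⊢
  exact ⟨hx.1, hx.2.imp fun n hn => ht.trans_lt hn⟩

lemma measurableSet_czSet : MeasurableSet (czSet a r g t) :=
  .biUnion (to_countable _) fun _ _ => measurableSet_dyadicCube

lemma le_of_mem_stoppingCubes (hr : 0 < r) (ht : t ≤ t') (hq : q ∈ stoppingCubes a r g t)
    (hq' : q' ∈ stoppingCubes a r g t') (hx : x ∈ dyadicCube a r q.1 q.2)
    (hx' : x ∈ dyadicCube a r q'.1 q'.2) : q.1 ≤ q'.1 := by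
  by_contra! hlt
  have h := hq.2.2 q'.1 hlt
  rw [ancestor_eq_of_mem hr hlt.le hx' hx] at h
  exact (ht.trans_lt hq'.2.1).not_ge h

lemma dyadicCube_subset_of_mem_stoppingCubes (hr : 0 < r) (ht : t ≤ t')
    (hq : q ∈ stoppingCubes a r g t) (hq' : q' ∈ stoppingCubes a r g t')
    (hx : x ∈ dyadicCube a r q.1 q.2) (hx' : x ∈ dyadicCube a r q'.1 q'.2) :
    dyadicCube a r q'.1 q'.2 ⊆ dyadicCube a r q.1 q.2 := by
  have hle := le_of_mem_stoppingCubes hr ht hq hq' hx hx'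
  rw [← ancestor_eq_of_mem hr hle hx hx']
  exact dyadicCube_subset_ancestor hr hle

lemma pairwise_disjoint_stoppingCubes (hr : 0 < r) :
    (stoppingCubes a r g t).Pairwise
      (Function.onFun Disjoint fun q : ℕ × (Fin d → ℤ) => dyadicCube a r q.1 q.2) := by
  intro q hq q' hq' hne
  refine disjoint_left.2 fun x hx hx' => hne ?_
  have hn : q.1 = q'.1 := le_antisymm (le_of_mem_stoppingCubes hr le_rfl hq hq' hx hx')
    (le_of_mem_stoppingCubes hr le_rfl hq' hq hx' hx)
  rw [mem_dyadicCube_iff hr] at hx hx'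
  exact Prod.ext hn (by rw [← hx, ← hx', hn])

lemma measure_biUnion_stoppingCubes (hr : 0 < r) {s : Set (ℕ × (Fin d → ℤ))}
    (hs : s ⊆ stoppingCubes a r g t) (μ : Measure (Fin d → ℝ)) :
    μ (⋃ q ∈ s, dyadicCube a r q.1 q.2) = ∑' q : s, μ (dyadicCube a r q.1.1 q.1.2) :=
  measure_biUnion (to_countable _) ((pairwise_disjoint_stoppingCubes hr).mono hs)
    fun _ _ => measurableSet_dyadicCube

lemma mul_volume_biUnion_le (hr : 0 < r) {s : Set (ℕ × (Fin d → ℤ))}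
    (hs : s ⊆ stoppingCubes a r g t) :
    t * volume (⋃ q ∈ s, dyadicCube a r q.1 q.2) ≤
      volume.withDensity g (⋃ q ∈ s, dyadicCube a r q.1 q.2) := by
  rw [measure_biUnion_stoppingCubes hr hs, measure_biUnion_stoppingCubes hr hs,
    ← ENNReal.tsum_mul_left]
  refine ENNReal.tsum_le_tsum fun q => ?_
  rw [withDensity_dyadicCube hr]
  exact mul_le_mul_left (hs q.2).2.1.le _

lemma withDensity_le_of_mem_stoppingCubes (hr : 0 < r)
    (hroot : avgE (dyadicCube a r 0 0) g ≤ t) (hq : q ∈ stoppingCubes a r g t) :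
    volume.withDensity g (dyadicCube a r q.1 q.2) ≤
      2 ^ d * t * volume (dyadicCube a r q.1 q.2) := by
  obtain ⟨n, hn⟩ : ∃ n, q.1 = n + 1 := by
    refine Nat.exists_eq_add_one.2 (Nat.pos_of_ne_zero fun h0 => ?_)
    have hq0 := hq.1
    rw [h0, ancestor_zero] at hq0
    exact hroot.not_gt (by simpa [h0, hq0] using hq.2.1)
  set parent := ancestor (q.1 - n) q.2
  calc volume.withDensity g (dyadicCube a r q.1 q.2)
      ≤ volume.withDensity g (dyadicCube a r n parent) :=
        measure_mono (dyadicCube_subset_ancestor hr (by omega))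
    _ = avgE (dyadicCube a r n parent) g * volume (dyadicCube a r n parent) :=
        withDensity_dyadicCube hr n parent
    _ ≤ t * (2 ^ d * volume (dyadicCube a r q.1 q.2)) := by
        rw [hn, ← volume_dyadicCube_eq_two_pow_mul hr n parent]
        exact mul_le_mul_left (hq.2.2 n (by omega)) _
    _ = 2 ^ d * t * volume (dyadicCube a r q.1 q.2) := by ring

lemma czSet_inter_dyadicCube (hr : 0 < r) (ht : t ≤ t') (hq : q ∈ stoppingCubes a r g t) :
    czSet a r g t' ∩ dyadicCube a r q.1 q.2 =
      ⋃ q' ∈ {q' ∈ stoppingCubes a r g t' | dyadicCube a r q'.1 q'.2 ⊆ dyadicCube a r q.1 q.2},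
        dyadicCube a r q'.1 q'.2 := by
  ext x
  simp only [czSet, mem_inter_iff, mem_iUnion, mem_ofPred_eq, exists_prop]
  constructor
  · rintro ⟨⟨q', hq', hx'⟩, hx⟩
    exact ⟨q', ⟨hq', dyadicCube_subset_of_mem_stoppingCubes hr ht hq hq' hx hx'⟩, hx'⟩
  · rintro ⟨q', ⟨hq', hsub⟩, hx'⟩
    exact ⟨⟨q', hq', hx'⟩, hsub hx'⟩

/-- A stopping cube at level `t` has `g`-average at most `2 ^ d * t`, because its parent was not
selected; hence the stopping cubes at level `2 ^ (d + 1) * t` fill at most half of it. -/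
lemma two_mul_volume_czSet_inter_le (hr : 0 < r) (hroot : avgE (dyadicCube a r 0 0) g ≤ t)
    (ht₀ : t ≠ 0) (ht : t ≠ ⊤) (hq : q ∈ stoppingCubes a r g t) :
    2 * volume (czSet a r g (2 ^ (d + 1) * t) ∩ dyadicCube a r q.1 q.2) ≤
      volume (dyadicCube a r q.1 q.2) := by
  have hle : t ≤ 2 ^ (d + 1) * t := le_mul_of_one_le_left' (one_le_pow₀ one_le_two)
  have hsub : {q' ∈ stoppingCubes a r g (2 ^ (d + 1) * t) |
      dyadicCube a r q'.1 q'.2 ⊆ dyadicCube a r q.1 q.2} ⊆ stoppingCubes a r g (2 ^ (d + 1) * t) :=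
    sep_subset _ _
  have hc₀ : (2 : ℝ≥0∞) ^ d * t ≠ 0 := mul_ne_zero (pow_ne_zero d two_ne_zero) ht₀
  have hc : (2 : ℝ≥0∞) ^ d * t ≠ ⊤ := mul_ne_top (pow_ne_top ofNat_ne_top) ht
  refine (ENNReal.mul_le_mul_iff_right hc₀ hc).1 ?_
  calc 2 ^ d * t * (2 * volume (czSet a r g (2 ^ (d + 1) * t) ∩ dyadicCube a r q.1 q.2))
      = 2 ^ (d + 1) * t * volume (czSet a r g (2 ^ (d + 1) * t) ∩ dyadicCube a r q.1 q.2) := by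
        ring
    _ ≤ volume.withDensity g (czSet a r g (2 ^ (d + 1) * t) ∩ dyadicCube a r q.1 q.2) := by
        rw [czSet_inter_dyadicCube hr hle hq]
        exact mul_volume_biUnion_le hr hsub
    _ ≤ volume.withDensity g (dyadicCube a r q.1 q.2) := measure_mono inter_subset_right
    _ ≤ 2 ^ d * t * volume (dyadicCube a r q.1 q.2) :=
        withDensity_le_of_mem_stoppingCubes hr hroot hq

lemma withDensity_czSet_le (hr : 0 < r) (hA : AInftyCondition β g)
    (hroot : avgE (dyadicCube a r 0 0) g ≤ t) (ht₀ : t ≠ 0) (ht : t ≠ ⊤) :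
    volume.withDensity g (czSet a r g (2 ^ (d + 1) * t)) ≤
      β * volume.withDensity g (czSet a r g t) := by
  have hle : t ≤ 2 ^ (d + 1) * t := le_mul_of_one_le_left' (one_le_pow₀ one_le_two)
  have hdecomp : czSet a r g (2 ^ (d + 1) * t) =
      ⋃ q ∈ stoppingCubes a r g t, czSet a r g (2 ^ (d + 1) * t) ∩ dyadicCube a r q.1 q.2 := by
    rw [← inter_iUnion₂]
    exact (inter_eq_self_of_subset_left (czSet_anti hr hle)).symm
  have hcube (q : stoppingCubes a r g t) :
      volume.withDensity g (czSet a r g (2 ^ (d + 1) * t) ∩ dyadicCube a r q.1.1 q.1.2) ≤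
        β * volume.withDensity g (dyadicCube a r q.1.1 q.1.2) := by
    rw [measure_congr ((dyadicCube_ae_eq_closedDyadicCube (a := a) (r := r)).filter_mono
      (withDensity_absolutelyContinuous volume g).ae_le)]
    refine hA _ (isCube_closedDyadicCube hr) _
      (inter_subset_right.trans dyadicCube_subset_closedDyadicCube)
      (measurableSet_czSet.inter measurableSet_dyadicCube) ?_
    rw [← measure_congr dyadicCube_ae_eq_closedDyadicCube]
    exact two_mul_volume_czSet_inter_le hr hroot ht₀ ht q.2
  rw [czSet.eq_def a r g t, measure_biUnion_stoppingCubes hr subset_rfl, ← ENNReal.tsum_mul_left,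
    hdecomp, measure_biUnion (to_countable _) (fun q hq q' hq' hne =>
      ((pairwise_disjoint_stoppingCubes hr hq hq' hne).mono inter_subset_right
        inter_subset_right)) fun _ _ => measurableSet_czSet.inter measurableSet_dyadicCube]
  exact ENNReal.tsum_le_tsum hcube

lemma withDensity_czSet_pow_mul_le (hr : 0 < r) (hA : AInftyCondition β g)
    (h₀ : avgE (dyadicCube a r 0 0) g ≠ 0) (htop : avgE (dyadicCube a r 0 0) g ≠ ⊤) (j : ℕ) :
    volume.withDensity g (czSet a r g ((2 ^ (d + 1)) ^ j * avgE (dyadicCube a r 0 0) g)) ≤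
      β ^ j * volume.withDensity g (dyadicCube a r 0 0) := by
  induction j with
  | zero => simpa using measure_mono (czSet_subset_dyadicCube_zero hr)
  | succ j ih =>
    have hroot : avgE (dyadicCube a r 0 0) g ≤ (2 ^ (d + 1)) ^ j * avgE (dyadicCube a r 0 0) g :=
      le_mul_of_one_le_left' (one_le_pow₀ (one_le_pow₀ one_le_two))
    calc volume.withDensity g
          (czSet a r g ((2 ^ (d + 1)) ^ (j + 1) * avgE (dyadicCube a r 0 0) g))
        ≤ β * volume.withDensity g
          (czSet a r g ((2 ^ (d + 1)) ^ j * avgE (dyadicCube a r 0 0) g)) := by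
          rw [pow_succ' _ j, mul_assoc]
          exact withDensity_czSet_le hr hA hroot (mul_ne_zero (by simp) h₀)
            (mul_ne_top (pow_ne_top (pow_ne_top ofNat_ne_top)) htop)
      _ ≤ β ^ (j + 1) * volume.withDensity g (dyadicCube a r 0 0) := by
          rw [pow_succ' β j, mul_assoc]
          exact mul_le_mul_right ih _

lemma ae_le_of_notMem_czSet (hr : 0 < r) (hfin : ∀ Q, IsCube Q → ∫⁻ x in Q, g x ≠ ⊤)
    (hg : AEMeasurable g) (t : ℝ≥0∞) :
    ∀ᵐ x, x ∈ dyadicCube a r 0 0 → x ∉ czSet a r g t → g x ≤ t := by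
  filter_upwards [ae_tendsto_avgE_dyadicCube (a := a) hr hfin hg] with x hx hroot hx'
  rw [mem_dyadicCube_iff hr] at hroot
  refine le_of_tendsto' hx fun n => not_lt.1 fun h => hx' ?_
  exact (mem_czSet_iff hr).2 ⟨hroot, n, h⟩

lemma mul_volume_czSet_le (hr : 0 < r) :
    t * volume (czSet a r g t) ≤ volume.withDensity g (dyadicCube a r 0 0) :=
  (mul_volume_biUnion_le hr subset_rfl).trans (measure_mono (czSet_subset_dyadicCube_zero hr))

end CalderonZygmund

lemma subset_diff_union_iUnion_diff_union_iInter {α : Type*} (S : Set α) (Ω : ℕ → Set α) :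
    S ⊆ (S \ Ω 0) ∪ (⋃ j, Ω j \ Ω (j + 1)) ∪ ⋂ j, Ω j := by
  classical
  intro x hx
  by_cases hall : ∀ j, x ∈ Ω j
  · exact Or.inr (mem_iInter.2 hall)
  push Not at hall
  refine Or.inl ?_
  rcases hn : Nat.find hall with _ | j
  · exact Or.inl ⟨hx, hn ▸ Nat.find_spec hall⟩
  · refine Or.inr (mem_iUnion.2 ⟨j, not_not.1 (Nat.find_min hall (by omega)), ?_⟩)
    exact hn ▸ Nat.find_spec hall

section Layers

variable {α : Type*} [MeasurableSpace α] {μ : Measure α} {g : α → ℝ≥0∞}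

lemma setLIntegral_rpow_le_of_ae_le (hg : AEMeasurable g μ) {S : Set α} (hS : MeasurableSet S)
    {L : ℝ≥0∞} {ε : ℝ} (hε : 0 ≤ ε) (h : ∀ᵐ x ∂μ, x ∈ S → g x ≤ L) :
    ∫⁻ x in S, g x ^ (1 + ε) ∂μ ≤ L ^ ε * μ.withDensity g S := by
  rw [withDensity_apply _ hS, ← lintegral_const_mul'' _ hg.restrict]
  refine lintegral_mono_ae ?_
  filter_upwards [ae_restrict_of_ae h, ae_restrict_mem hS] with x hx hxS
  rw [add_comm, ENNReal.rpow_add_of_nonneg _ _ hε zero_le_one, ENNReal.rpow_one]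
  gcongr
  exact hx hxS

lemma setLIntegral_rpow_eq_zero (hg : AEMeasurable g μ) {S : Set α} (hS : MeasurableSet S)
    {ε : ℝ} (hε : 0 ≤ ε) (h : μ.withDensity g S = 0) : ∫⁻ x in S, g x ^ (1 + ε) ∂μ = 0 := by
  have hzero : ∀ᵐ x ∂μ, x ∈ S → g x ≤ 0 := by
    rw [withDensity_apply _ hS, lintegral_eq_zero_iff' hg.restrict, EventuallyEq,
      ae_restrict_iff' hS] at h
    filter_upwards [h] with x hx hxS using (hx hxS).le
  refine le_antisymm ?_ zero_le
  exact (setLIntegral_rpow_le_of_ae_le hg hS hε hzero).trans_eq (by rw [h, mul_zero])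

/-- Split `S` into `S \ Ω 0`, the layers `Ω j \ Ω (j + 1)` on which `g ≤ t (j + 1)`, and the null
set `⋂ j, Ω j`. -/
lemma setLIntegral_rpow_le_tsum (hg : AEMeasurable g μ) {S : Set α} (hS : MeasurableSet S)
    {Ω : ℕ → Set α} (hΩ : ∀ j, MeasurableSet (Ω j)) (hΩS : ∀ j, Ω j ⊆ S)
    (hnull : μ (⋂ j, Ω j) = 0) {t : ℕ → ℝ≥0∞} (hle : ∀ j, ∀ᵐ x ∂μ, x ∈ S → x ∉ Ω j → g x ≤ t j)
    {ε : ℝ} (hε : 0 ≤ ε) :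
    ∫⁻ x in S, g x ^ (1 + ε) ∂μ ≤
      t 0 ^ ε * μ.withDensity g S + ∑' j, t (j + 1) ^ ε * μ.withDensity g (Ω j) := by
  have hlayer (j : ℕ) : ∫⁻ x in Ω j \ Ω (j + 1), g x ^ (1 + ε) ∂μ ≤
      t (j + 1) ^ ε * μ.withDensity g (Ω j) := by
    refine (setLIntegral_rpow_le_of_ae_le (L := t (j + 1)) hg ((hΩ j).diff (hΩ (j + 1))) hε
      ?_).trans ?_
    · filter_upwards [hle (j + 1)] with x hx hxj using hx (hΩS j hxj.1) hxj.2
    · exact mul_le_mul_right (measure_mono sdiff_subset) _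
  calc ∫⁻ x in S, g x ^ (1 + ε) ∂μ
      ≤ ∫⁻ x in (S \ Ω 0) ∪ (⋃ j, Ω j \ Ω (j + 1)) ∪ ⋂ j, Ω j, g x ^ (1 + ε) ∂μ :=
        lintegral_mono_set (subset_diff_union_iUnion_diff_union_iInter S Ω)
    _ ≤ ∫⁻ x in S \ Ω 0, g x ^ (1 + ε) ∂μ + ∑' j, ∫⁻ x in Ω j \ Ω (j + 1), g x ^ (1 + ε) ∂μ := by
        refine (lintegral_union_le _ _ _).trans ?_
        rw [setLIntegral_measure_zero _ _ hnull, add_zero]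
        exact (lintegral_union_le _ _ _).trans (add_le_add le_rfl (lintegral_iUnion_le _ _))
    _ ≤ t 0 ^ ε * μ.withDensity g S + ∑' j, t (j + 1) ^ ε * μ.withDensity g (Ω j) := by
        gcongr ?_ + ?_
        · refine (setLIntegral_rpow_le_of_ae_le (L := t 0) hg (hS.diff (hΩ 0)) hε ?_).trans ?_
          · filter_upwards [hle 0] with x hx hx0 using hx hx0.1 hx0.2
          · exact mul_le_mul_right (measure_mono sdiff_subset) _
        · exact ENNReal.tsum_le_tsum hlayer

end Layers

lemma exists_pos_rpow_mul_lt_one {x : ℝ} (hx : 0 < x) {β : ℝ≥0∞} (hβ : β < 1) :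
    ∃ ε : ℝ, 0 < ε ∧ ENNReal.ofReal x ^ ε * β < 1 := by
  have hlim : Tendsto (fun ε : ℝ => ENNReal.ofReal (x ^ ε) * β) (𝓝[>] 0) (𝓝 β) := by
    have h := ENNReal.Tendsto.mul_const
      (ENNReal.tendsto_ofReal (Real.continuousAt_const_rpow (b := 0) hx.ne').tendsto)
      (b := β) (Or.inl (by simp))
    simpa using h.mono_left nhdsWithin_le_nhds
  obtain ⟨ε, hlt, hε⟩ := ((hlim.eventually (gt_mem_nhds hβ)).and self_mem_nhdsWithin).exists
  exact ⟨ε, hε, by rwa [ENNReal.ofReal_rpow_of_pos hx]⟩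

section ReverseHolder

variable {a : Fin d → ℝ} {r : ℝ} {g : (Fin d → ℝ) → ℝ≥0∞} {β : ℝ≥0∞}

lemma volume_iInter_czSet_eq_zero (hr : 0 < r)
    (h₀ : volume.withDensity g (dyadicCube a r 0 0) ≠ 0)
    (htop : volume.withDensity g (dyadicCube a r 0 0) ≠ ⊤) {t : ℕ → ℝ≥0∞}
    (ht : Tendsto t atTop (𝓝 ⊤)) : volume (⋂ j, czSet a r g (t j)) = 0 := by
  have hle (j : ℕ) : volume (⋂ j, czSet a r g (t j)) ≤
      volume.withDensity g (dyadicCube a r 0 0) / t j := by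
    refine (measure_mono (iInter_subset _ j)).trans ?_
    rw [ENNReal.le_div_iff_mul_le (Or.inr h₀) (Or.inr htop), mul_comm]
    exact mul_volume_czSet_le hr
  have hlim : Tendsto (fun j => volume.withDensity g (dyadicCube a r 0 0) / t j) atTop (𝓝 0) := by
    simpa using ENNReal.Tendsto.const_div ht (Or.inr htop)
  exact le_antisymm (ge_of_tendsto' hlim hle) zero_le

lemma avgE_closedDyadicCube (f : (Fin d → ℝ) → ℝ≥0∞) (n : ℕ) (k : Fin d → ℤ) :
    avgE (closedDyadicCube a r n k) f = avgE (dyadicCube a r n k) f := by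
  rw [avgE, avgE, measure_congr dyadicCube_ae_eq_closedDyadicCube,
    setLIntegral_congr dyadicCube_ae_eq_closedDyadicCube]

/-- The Calderón–Zygmund levels `t j = 2 ^ ((d + 1) j) ⟨g⟩` carry geometrically decaying mass, so
the layer decomposition sums to a geometric series. -/
theorem lintegral_rpow_dyadicCube_zero_le (hr : 0 < r) (hg : AEMeasurable g)
    (hfin : ∀ Q, IsCube Q → ∫⁻ x in Q, g x ≠ ⊤) (hA : AInftyCondition β g) {ε : ℝ} (hε : 0 < ε) :
    ∫⁻ x in dyadicCube a r 0 0, g x ^ (1 + ε) ≤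
      (1 + ((2 : ℝ≥0∞) ^ (d + 1)) ^ ε * (1 - ((2 : ℝ≥0∞) ^ (d + 1)) ^ ε * β)⁻¹) *
        avgE (dyadicCube a r 0 0) g ^ ε * volume.withDensity g (dyadicCube a r 0 0) := by
  set D := dyadicCube a r 0 0
  set X : ℝ≥0∞ := 2 ^ (d + 1)
  set A := avgE D g
  rcases eq_or_ne (volume.withDensity g D) 0 with h₀ | h₀
  · rw [setLIntegral_rpow_eq_zero hg measurableSet_dyadicCube hε.le h₀]
    exact zero_le
  have hνtop : volume.withDensity g D ≠ ⊤ := by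
    rw [withDensity_apply _ measurableSet_dyadicCube,
      setLIntegral_congr dyadicCube_ae_eq_closedDyadicCube]
    exact hfin _ (isCube_closedDyadicCube hr)
  have hD : volume.withDensity g D = A * volume D := withDensity_dyadicCube hr 0 0
  have hA₀ : A ≠ 0 := fun h => h₀ (by rw [hD, h, zero_mul])
  have hAtop : A ≠ ⊤ := mul_ne_top (ENNReal.inv_ne_top.2 (volume_dyadicCube_pos hr).ne')
    (by rwa [← withDensity_apply _ measurableSet_dyadicCube])
  set t : ℕ → ℝ≥0∞ := fun j => X ^ j * A
  have hlim : Tendsto t atTop (𝓝 ⊤) := by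
    have h := ENNReal.Tendsto.mul_const (b := A) (ENNReal.tendsto_pow_atTop_nhds_top_iff.2
      (one_lt_pow₀ one_lt_two (Nat.succ_ne_zero d))) (Or.inl top_ne_zero)
    rwa [ENNReal.top_mul hA₀] at h
  have hlevel (j : ℕ) : t (j + 1) ^ ε = X ^ ε * (X ^ ε) ^ j * A ^ ε := by
    have hpow : (X ^ (j + 1)) ^ ε = (X ^ ε) ^ (j + 1) := by
      rw [← ENNReal.rpow_natCast, ← ENNReal.rpow_mul, mul_comm, ENNReal.rpow_mul,
        ENNReal.rpow_natCast]
    rw [ENNReal.mul_rpow_of_nonneg _ _ hε.le, hpow, pow_succ']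
  calc ∫⁻ x in D, g x ^ (1 + ε)
      ≤ t 0 ^ ε * volume.withDensity g D +
          ∑' j, t (j + 1) ^ ε * volume.withDensity g (czSet a r g (t j)) :=
        setLIntegral_rpow_le_tsum hg measurableSet_dyadicCube (fun _ => measurableSet_czSet)
          (fun _ => czSet_subset_dyadicCube_zero hr)
          (volume_iInter_czSet_eq_zero hr h₀ hνtop hlim)
          (fun j => ae_le_of_notMem_czSet hr hfin hg (t j)) hε.le
    _ ≤ A ^ ε * volume.withDensity g D +
          ∑' j, X ^ ε * (A ^ ε * volume.withDensity g D) * (X ^ ε * β) ^ j := by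
        refine add_le_add (by simp [t]) (ENNReal.tsum_le_tsum fun j => ?_)
        calc t (j + 1) ^ ε * volume.withDensity g (czSet a r g (t j))
            ≤ t (j + 1) ^ ε * (β ^ j * volume.withDensity g D) :=
              mul_le_mul_right (withDensity_czSet_pow_mul_le hr hA hA₀ hAtop j) _
          _ = X ^ ε * (A ^ ε * volume.withDensity g D) * (X ^ ε * β) ^ j := by
            rw [hlevel, mul_pow]
            ring
    _ = (1 + X ^ ε * (1 - X ^ ε * β)⁻¹) * A ^ ε * volume.withDensity g D := by
        rw [ENNReal.tsum_mul_left, ENNReal.tsum_geometric]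
        ring

theorem exists_reverseHolder (hg : AEMeasurable g) (hfin : ∀ Q, IsCube Q → ∫⁻ x in Q, g x ≠ ⊤)
    (hβ : β < 1) (hA : AInftyCondition β g) :
    ∃ ε : ℝ, 0 < ε ∧ ∃ C : ℝ≥0∞, C ≠ ⊤ ∧
      ∀ Q, IsCube Q → avgE Q (fun x => g x ^ (1 + ε)) ≤ C * avgE Q g ^ (1 + ε) := by
  set X : ℝ≥0∞ := 2 ^ (d + 1)
  obtain ⟨ε, hε, hc⟩ := exists_pos_rpow_mul_lt_one (x := 2 ^ (d + 1)) (by positivity) hβ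
  rw [ENNReal.ofReal_pow zero_le_two, ENNReal.ofReal_ofNat] at hc
  refine ⟨ε, hε, 1 + X ^ ε * (1 - X ^ ε * β)⁻¹, ?_, ?_⟩
  · exact add_ne_top.2 ⟨one_ne_top, mul_ne_top (rpow_ne_top_of_nonneg hε.le
      (pow_ne_top ofNat_ne_top)) (inv_ne_top.2 (tsub_pos_of_lt hc).ne')⟩
  rintro Q ⟨b, ρ, hρ, rfl⟩
  rw [← closedDyadicCube_zero_zero, avgE_closedDyadicCube, avgE_closedDyadicCube]
  have h := lintegral_rpow_dyadicCube_zero_le (a := b) hρ hg hfin hA hε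
  rw [withDensity_apply _ measurableSet_dyadicCube] at h
  calc avgE (dyadicCube b ρ 0 0) (fun x => g x ^ (1 + ε))
      ≤ (volume (dyadicCube b ρ 0 0))⁻¹ * ((1 + X ^ ε * (1 - X ^ ε * β)⁻¹) *
          avgE (dyadicCube b ρ 0 0) g ^ ε * ∫⁻ x in dyadicCube b ρ 0 0, g x) :=
        mul_le_mul_right h _
    _ = (1 + X ^ ε * (1 - X ^ ε * β)⁻¹) * avgE (dyadicCube b ρ 0 0) g ^ (1 + ε) := by
        rw [add_comm 1 ε, ENNReal.rpow_add_of_nonneg _ _ hε.le zero_le_one, ENNReal.rpow_one, avgE]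
        ring

end ReverseHolder

lemma measure_le_one_sub_inv_mul {α : Type*} [MeasurableSpace α] {μ : Measure α} {E Q : Set α}
    (hEQ : E ⊆ Q) (hE : MeasurableSet E) (hQ : μ Q ≠ ⊤) {c : ℝ≥0∞} (h : μ Q ≤ c * μ (Q \ E)) :
    μ E ≤ (1 - c⁻¹) * μ Q := by
  have hsplit : μ E + μ (Q \ E) = μ Q := by
    rw [← measure_inter_add_sdiff Q hE, inter_eq_self_of_subset_right hEQ]
  have hF : c⁻¹ * μ Q ≤ μ (Q \ E) := by
    rw [mul_comm, ← div_eq_mul_inv]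
    exact ENNReal.div_le_of_le_mul' h
  rw [ENNReal.eq_sub_of_add_eq (ne_top_of_le_ne_top hQ (measure_mono sdiff_subset)) hsplit,
    ENNReal.sub_mul fun _ _ => hQ, one_mul]
  exact tsub_le_tsub_left hF _

lemma measure_rpow_le_lintegral_mul_lintegral_rpow {α : Type*} [MeasurableSpace α] {μ : Measure α}
    {p : ℝ} (hp : 1 < p) {w σ : α → ℝ≥0∞} (hw : AEMeasurable w μ) (hσ : AEMeasurable σ μ)
    (hwσ : ∀ᵐ x ∂μ, w x * σ x ^ (p - 1) = 1) (E : Set α) :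
    μ E ^ p ≤ (∫⁻ x in E, w x ∂μ) * (∫⁻ x in E, σ x ∂μ) ^ (p - 1) := by
  have hp₀ : 0 < p := by linarith
  have hp₁ : 0 < p - 1 := by linarith
  have hone : μ E = ∫⁻ x in E, w x ^ p⁻¹ * σ x ^ ((p - 1) / p) ∂μ := by
    rw [← setLIntegral_one]
    refine lintegral_congr_ae (ae_restrict_of_ae ?_)
    filter_upwards [hwσ] with x hx
    rw [div_eq_mul_inv, ENNReal.rpow_mul, ← ENNReal.mul_rpow_of_nonneg _ _ (by positivity), hx,
      ENNReal.one_rpow]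
  have hHolder := ENNReal.lintegral_mul_le_Lp_mul_Lq (μ.restrict E)
    (Real.HolderConjugate.conjExponent hp) (hw.pow_const p⁻¹).restrict
    (hσ.pow_const ((p - 1) / p)).restrict
  have hexp : (p - 1) / p * p.conjExponent = 1 := by
    unfold Real.conjExponent
    field_simp
  simp only [Pi.mul_apply, ← ENNReal.rpow_mul, inv_mul_cancel₀ hp₀.ne', hexp,
    ENNReal.rpow_one] at hHolder
  rw [hone]
  calc (∫⁻ x in E, w x ^ p⁻¹ * σ x ^ ((p - 1) / p) ∂μ) ^ p
      ≤ ((∫⁻ x in E, w x ∂μ) ^ (1 / p) * (∫⁻ x in E, σ x ∂μ) ^ (1 / p.conjExponent)) ^ p :=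
        ENNReal.rpow_le_rpow hHolder hp₀.le
    _ = (∫⁻ x in E, w x ∂μ) * (∫⁻ x in E, σ x ∂μ) ^ (p - 1) := by
        rw [ENNReal.mul_rpow_of_nonneg _ _ hp₀.le, ← ENNReal.rpow_mul, ← ENNReal.rpow_mul,
          one_div_mul_cancel hp₀.ne', ENNReal.rpow_one]
        congr 2
        unfold Real.conjExponent
        field_simp

section ApWeights

variable {p : ℝ} {w σ : (Fin d → ℝ) → ℝ≥0∞} {A : ℝ≥0∞}

lemma lintegral_mul_lintegral_rpow_le (hp : 1 ≤ p) {Q : Set (Fin d → ℝ)} (hQ : IsCube Q)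
    (h : avgE Q w * avgE Q σ ^ (p - 1) ≤ A) :
    (∫⁻ x in Q, w x) * (∫⁻ x in Q, σ x) ^ (p - 1) ≤ A * volume Q ^ p := by
  rw [hQ.lintegral_eq_volume_mul_avgE, hQ.lintegral_eq_volume_mul_avgE,
    ENNReal.mul_rpow_of_nonneg _ _ (by linarith)]
  calc volume Q * avgE Q w * (volume Q ^ (p - 1) * avgE Q σ ^ (p - 1))
      = volume Q ^ (1 + (p - 1)) * (avgE Q w * avgE Q σ ^ (p - 1)) := by
        rw [ENNReal.rpow_add _ _ hQ.volume_pos.ne' hQ.volume_ne_top_s4, ENNReal.rpow_one]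
        ring
    _ ≤ A * volume Q ^ p := by
        rw [add_sub_cancel, mul_comm]
        exact mul_le_mul_left h _

variable (hp : 1 < p) (hw : AEMeasurable w) (hσ : AEMeasurable σ)
  (hwσ : ∀ᵐ x, w x * σ x ^ (p - 1) = 1) (hA : ∀ Q, IsCube Q → avgE Q w * avgE Q σ ^ (p - 1) ≤ A)
include hp hw hσ hwσ hA

lemma lintegral_ne_top_of_avgE_mul_le (hA_top : A ≠ ⊤) {Q : Set (Fin d → ℝ)} (hQ : IsCube Q) :
    ∫⁻ x in Q, σ x ≠ ⊤ := by
  have hHolder := measure_rpow_le_lintegral_mul_lintegral_rpow hp hw hσ hwσ Q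
  have hw₀ : ∫⁻ x in Q, w x ≠ 0 := fun h => by
    rw [h, zero_mul] at hHolder
    exact (ENNReal.rpow_pos hQ.volume_pos hQ.volume_ne_top_s4).ne' (le_zero_iff.1 hHolder)
  intro htop
  have h := lintegral_mul_lintegral_rpow_le hp.le hQ (hA Q hQ)
  rw [htop, ENNReal.top_rpow_of_pos (by linarith), ENNReal.mul_top hw₀, top_le_iff] at h
  exact mul_ne_top hA_top (ENNReal.rpow_ne_top_of_nonneg (by linarith) hQ.volume_ne_top_s4) h

/-- Hölder on `F`, then the `A_p` bound on `Q`. -/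
lemma lintegral_rpow_le_of_volume_le_two_mul {Q F : Set (Fin d → ℝ)} (hQ : IsCube Q) (hFQ : F ⊆ Q)
    (hF : volume Q ≤ 2 * volume F) :
    (∫⁻ x in Q, σ x) ^ (p - 1) ≤ 2 ^ p * A * (∫⁻ x in F, σ x) ^ (p - 1) := by
  have hp₀ : 0 < p := by linarith
  refine (ENNReal.mul_le_mul_iff_right (ENNReal.rpow_pos hQ.volume_pos hQ.volume_ne_top_s4).ne'
    (ENNReal.rpow_ne_top_of_nonneg hp₀.le hQ.volume_ne_top_s4)).1 ?_
  calc volume Q ^ p * (∫⁻ x in Q, σ x) ^ (p - 1)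
      ≤ 2 ^ p * volume F ^ p * (∫⁻ x in Q, σ x) ^ (p - 1) := by
        rw [← ENNReal.mul_rpow_of_nonneg _ _ hp₀.le]
        gcongr
    _ ≤ 2 ^ p * ((∫⁻ x in F, w x) * (∫⁻ x in F, σ x) ^ (p - 1)) * (∫⁻ x in Q, σ x) ^ (p - 1) := by
        gcongr
        exact measure_rpow_le_lintegral_mul_lintegral_rpow hp hw hσ hwσ F
    _ ≤ 2 ^ p * ((∫⁻ x in Q, w x) * (∫⁻ x in F, σ x) ^ (p - 1)) * (∫⁻ x in Q, σ x) ^ (p - 1) := by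
        gcongr
    _ = 2 ^ p * (∫⁻ x in F, σ x) ^ (p - 1) * ((∫⁻ x in Q, w x) * (∫⁻ x in Q, σ x) ^ (p - 1)) := by
        ring
    _ ≤ 2 ^ p * (∫⁻ x in F, σ x) ^ (p - 1) * (A * volume Q ^ p) :=
        mul_le_mul_right (lintegral_mul_lintegral_rpow_le hp.le hQ (hA Q hQ)) _
    _ = volume Q ^ p * (2 ^ p * A * (∫⁻ x in F, σ x) ^ (p - 1)) := by ring

lemma AInftyCondition_of_avgE_mul_le (hA_top : A ≠ ⊤) :
    AInftyCondition (1 - ((2 ^ p * A) ^ (p - 1)⁻¹)⁻¹) σ := by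
  intro Q hQ E hEQ hE hhalf
  have hp₁ : 0 < p - 1 := by linarith
  have hQF : volume Q ≤ 2 * volume (Q \ E) := by
    have hsplit : volume E + volume (Q \ E) = volume Q := by
      rw [← measure_inter_add_sdiff Q hE, inter_eq_self_of_subset_right hEQ]
    have hE_top : volume E ≠ ⊤ := ne_top_of_le_ne_top hQ.volume_ne_top_s4 (measure_mono hEQ)
    rw [← hsplit, two_mul] at hhalf ⊢
    exact add_le_add ((ENNReal.add_le_add_iff_left hE_top).1 hhalf) le_rfl
  refine measure_le_one_sub_inv_mul hEQ hE ?_ ?_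
  · rw [withDensity_apply _ hQ.measurableSet]
    exact lintegral_ne_top_of_avgE_mul_le hp hw hσ hwσ hA hA_top hQ
  · have h := ENNReal.rpow_le_rpow
      (lintegral_rpow_le_of_volume_le_two_mul hp hw hσ hwσ hA hQ sdiff_subset hQF)
      (inv_nonneg.2 hp₁.le)
    rwa [ENNReal.mul_rpow_of_nonneg _ _ (inv_nonneg.2 hp₁.le), ← ENNReal.rpow_mul,
      ← ENNReal.rpow_mul, mul_inv_cancel₀ hp₁.ne', ENNReal.rpow_one, ENNReal.rpow_one,
      ← withDensity_apply _ hQ.measurableSet,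
      ← withDensity_apply _ (hQ.measurableSet.diff hE)] at h

theorem exists_reverseHolder_of_avgE_mul_le (hA_top : A ≠ ⊤) :
    ∃ ε : ℝ, 0 < ε ∧ ∃ C : ℝ≥0∞, C ≠ ⊤ ∧
      ∀ Q, IsCube Q → avgE Q (fun x => σ x ^ (1 + ε)) ≤ C * avgE Q σ ^ (1 + ε) := by
  have hc : (2 ^ p * A) ^ (p - 1)⁻¹ ≠ ⊤ := rpow_ne_top_of_nonneg (by simp; linarith)
    (mul_ne_top (rpow_ne_top_of_nonneg (by linarith) ofNat_ne_top) hA_top)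
  exact exists_reverseHolder hσ (fun Q => lintegral_ne_top_of_avgE_mul_le hp hw hσ hwσ hA hA_top)
    (ENNReal.sub_lt_self one_ne_top one_ne_zero (ENNReal.inv_ne_zero.2 hc))
    (AInftyCondition_of_avgE_mul_le hp hw hσ hwσ hA hA_top)

end ApWeights

lemma avgE_mul_avgE_rpow_le_ApConst {p : ℝ} {w : (Fin d → ℝ) → ℝ} {Q : Set (Fin d → ℝ)}
    (hQ : IsCube Q) :
    avgE Q (fun x => oR (w x)) * avgE Q (fun x => oR (w x ^ (-(1 : ℝ) / (p - 1)))) ^ (p - 1) ≤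
      ApConst p w :=
  le_iSup (fun Q : {S : Set (Fin d → ℝ) // IsCube S} => avgE Q.1 (fun x => oR (w x)) *
    avgE Q.1 (fun x => oR (w x ^ (-(1 : ℝ) / (p - 1)))) ^ (p - 1)) ⟨Q, hQ⟩

/-- Reverse Hölder with exponent `1 + ε` for `σ = w ^ (-1 / (p - 1))` turns the `A_p` bound into an
`A_q` bound with `q - 1 = (p - 1) / (1 + ε)`, since then `w ^ (-1 / (q - 1)) = σ ^ (1 + ε)`. -/
lemma ApConst_le_of_reverseHolder {p : ℝ} (hp : 1 < p) {w : (Fin d → ℝ) → ℝ}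
    (hw : ∀ᵐ x, 0 ≤ w x) {ε : ℝ} (hε : 0 < ε) {C : ℝ≥0∞}
    (hRH : ∀ Q, IsCube Q → avgE Q (fun x => oR (w x ^ (-(1 : ℝ) / (p - 1))) ^ (1 + ε)) ≤
      C * avgE Q (fun x => oR (w x ^ (-(1 : ℝ) / (p - 1)))) ^ (1 + ε)) :
    ApConst (1 + (p - 1) / (1 + ε)) w ≤ C ^ ((p - 1) / (1 + ε)) * ApConst p w := by
  have hq₀ : 0 ≤ (p - 1) / (1 + ε) := div_nonneg (by linarith) (by linarith)
  rw [ApConst, add_sub_cancel_left]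
  refine iSup_le fun Q => ?_
  have hσ : avgE Q.1 (fun x => oR (w x ^ (-(1 : ℝ) / ((p - 1) / (1 + ε))))) =
      avgE Q.1 (fun x => oR (w x ^ (-(1 : ℝ) / (p - 1))) ^ (1 + ε)) := by
    unfold avgE
    congr 1
    refine lintegral_congr_ae (ae_restrict_of_ae ?_)
    filter_upwards [hw] with x hx
    rw [oR, oR, ENNReal.ofReal_rpow_of_nonneg (Real.rpow_nonneg hx _) (by linarith),
      ← Real.rpow_mul hx]
    congr 2
    field_simp
  rw [hσ]
  calc avgE Q.1 (fun x => oR (w x)) *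
        avgE Q.1 (fun x => oR (w x ^ (-(1 : ℝ) / (p - 1))) ^ (1 + ε)) ^ ((p - 1) / (1 + ε))
      ≤ avgE Q.1 (fun x => oR (w x)) *
        (C * avgE Q.1 (fun x => oR (w x ^ (-(1 : ℝ) / (p - 1)))) ^ (1 + ε)) ^
          ((p - 1) / (1 + ε)) := by
        gcongr
        exact hRH Q.1 Q.2
    _ = C ^ ((p - 1) / (1 + ε)) * (avgE Q.1 (fun x => oR (w x)) *
        avgE Q.1 (fun x => oR (w x ^ (-(1 : ℝ) / (p - 1)))) ^ (p - 1)) := by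
        rw [ENNReal.mul_rpow_of_nonneg _ _ hq₀, ← ENNReal.rpow_mul,
          mul_div_cancel₀ _ (by linarith : (1 + ε) ≠ 0)]
        ring
    _ ≤ C ^ ((p - 1) / (1 + ε)) * ApConst p w :=
        mul_le_mul_right (avgE_mul_avgE_rpow_le_ApConst Q.2) _

end Muckenhoupt

open Muckenhoupt

/-- Openness of the Muckenhoupt classes: if `w ∈ A_p(ℝ^d)`, `1 < p < ∞`,
then `w ∈ A_q(ℝ^d)` for some `1 < q < p`. -/
theorem Ap_openness (d : ℕ) (p : ℝ) (hp : 1 < p)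
    (w : (Fin d → ℝ) → ℝ) (hw : MemAp p w) :
    ∃ q : ℝ, 1 < q ∧ q < p ∧ MemAp q w := by
  obtain ⟨hweight, hA⟩ := hw
  have hwm : AEMeasurable w := hweight.1.aestronglyMeasurable.aemeasurable
  have hdual : ∀ᵐ x, oR (w x) * oR (w x ^ (-(1 : ℝ) / (p - 1))) ^ (p - 1) = 1 := by
    filter_upwards [hweight.2] with x hx
    rw [oR, oR, ENNReal.ofReal_rpow_of_nonneg (by positivity) (by linarith), ← Real.rpow_mul hx.le,
      div_mul_cancel₀ _ (by linarith : p - 1 ≠ 0), Real.rpow_neg_one, ← ENNReal.ofReal_mul hx.le,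
      mul_inv_cancel₀ hx.ne', ENNReal.ofReal_one]
  obtain ⟨ε, hε, C, hC, hRH⟩ := exists_reverseHolder_of_avgE_mul_le hp
    hwm.ennreal_ofReal (hwm.pow_const _).ennreal_ofReal hdual
    (fun Q hQ => avgE_mul_avgE_rpow_le_ApConst hQ) hA.ne
  have hq : 0 < (p - 1) / (1 + ε) := div_pos (by linarith) (by linarith)
  have hqp : (p - 1) / (1 + ε) < p - 1 := div_lt_self (by linarith) (by linarith)
  refine ⟨1 + (p - 1) / (1 + ε), by linarith, by linarith, hweight, ?_⟩
  exact (ApConst_le_of_reverseHolder hp (hweight.2.mono fun x hx => hx.le) hε hRH).trans_lt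
    (mul_lt_top (rpow_lt_top_of_nonneg hq.le hC) hA)
end
end
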